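/- (Observation 2.1) In any labelled transition system, if s ~ t then the class-change norms of s and t are equal: ‖s‖_cc = ‖t‖_cc (where both may be ω). -/
import Mathlib


/-! Common definitions: labelled transition systems, branching bisimulation,
branching bisimilarity, silent states, class-change norm, BPA systems,
right-to-left finite transducers. -/

/-- A τ-path `t = t₀ →τ t₁ →τ ⋯ →τ t_k` in which every state after `t₀`
is related to `s` by `B`. -/
inductive TauSeq {S Act : Type} (tr : S → Act → S → Prop) (τ : Act)
    (B : S → S → Prop) (s : S) : S → S → Prop
  | refl (t : S) : TauSeq tr τ B s t t
  | step {t t' t'' : S} : tr t τ t' → B s t' → TauSeq tr τ B s t' t'' →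
      TauSeq tr τ B s t t''

/-- `B` is a branching bisimulation in the LTS given by `tr` with silent action `τ`. -/
def IsBranchingBisim {S Act : Type} (tr : S → Act → S → Prop) (τ : Act)
    (B : S → S → Prop) : Prop :=
  ∀ s t, B s t →
    (∀ a s', tr s a s' →
      ((a = τ ∧ B s' t) ∨
        ∃ tk t', TauSeq tr τ B s t tk ∧ tr tk a t' ∧ B s' t')) ∧
    (∀ a t', tr t a t' →
      ((a = τ ∧ B s t') ∨
        ∃ sk s', TauSeq tr τ (fun u v => B v u) t s sk ∧ tr sk a s' ∧ B s' t'))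

/-- Branching bisimilarity: `s ~ t` iff some branching bisimulation contains `(s,t)`. -/
def BBisim {S Act : Type} (tr : S → Act → S → Prop) (τ : Act) (s t : S) : Prop :=
  ∃ B, IsBranchingBisim tr τ B ∧ B s t

/-- `Steps tr s w t`: there is a path from `s` to `t` labelled by the word `w`. -/
inductive Steps {S Act : Type} (tr : S → Act → S → Prop) : S → List Act → S → Prop
  | refl (s : S) : Steps tr s [] s
  | step {s : S} {a : Act} {s' : S} {w : List Act} {t : S} :
      tr s a s' → Steps tr s' w t → Steps tr s (a :: w) t

/-- A state is silent if only τ-labelled words can be performed from it. -/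
def SilentState {S Act : Type} (tr : S → Act → S → Prop) (τ : Act) (s : S) : Prop :=
  ∀ w s', Steps tr s w s' → ∀ a ∈ w, a = τ

/-- A τ-path in which no transition is class-changing (each step stays in the same
`~`-class). -/
inductive TauNC {S Act : Type} (tr : S → Act → S → Prop) (τ : Act) : S → S → Prop
  | refl (t : S) : TauNC tr τ t t
  | step {t t' t'' : S} : tr t τ t' → BBisim tr τ t t' → TauNC tr τ t' t'' →
      TauNC tr τ t t''

/-- `CCPath tr τ s n t`: there is a path from `s` to `t` containing exactly `n`
class-changing transitions. -/
inductive CCPath {S Act : Type} (tr : S → Act → S → Prop) (τ : Act) : S → ℕ → S → Prop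
  | refl (s : S) : CCPath tr τ s 0 s
  | stepEq {s : S} {a : Act} {s' : S} {n : ℕ} {t : S} :
      tr s a s' → BBisim tr τ s s' → CCPath tr τ s' n t → CCPath tr τ s n t
  | stepNe {s : S} {a : Act} {s' : S} {n : ℕ} {t : S} :
      tr s a s' → ¬ BBisim tr τ s s' → CCPath tr τ s' n t → CCPath tr τ s (n + 1) t

/-- The class-change norm: the least number of class-changing transitions on a path
to a silent state; `⊤` (ω) if no silent state is reachable. -/
noncomputable def ccNorm {S Act : Type} (tr : S → Act → S → Prop) (τ : Act) (s : S) : ℕ∞ :=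
  sInf {n : ℕ∞ | ∃ ℓ : ℕ, n = (ℓ : ℕ∞) ∧ ∃ t, CCPath tr τ s ℓ t ∧ SilentState tr τ t}

/-- A BPA system: a finite set of rules `A →a α` (a context-free grammar in
Greibach normal form, no starting variable). -/
structure BPA (V Act : Type) where
  rules : Finset (V × Act × List V)

/-- The transition relation of the LTS `L_G` associated with a BPA system `G`:
`Aβ →a γβ` whenever `A →a γ` is a rule. -/
def BPA.tr {V Act : Type} (G : BPA V Act) : List V → Act → List V → Prop :=
  fun s a t => ∃ (A : V) (γ β : List V), (A, a, γ) ∈ G.rules ∧ s = A :: β ∧ t = γ ++ β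

/-- The (standard, syntactic) norm of a process: the length of a shortest word
leading to the empty process; `⊤` (ω) if there is none. -/
noncomputable def BPA.norm {V Act : Type} (G : BPA V Act) (α : List V) : ℕ∞ :=
  sInf {n : ℕ∞ | ∃ w : List Act, n = (w.length : ℕ∞) ∧ Steps G.tr α w []}

/-- A BPA system is normed if every variable has a finite norm. -/
def BPA.Normed {V Act : Type} (G : BPA V Act) : Prop :=
  ∀ A : V, G.norm [A] ≠ ⊤

/-- The transition relation of `L_{G,R}`: as `L_G`, but all outgoing transitions of
states in `R*` are removed. -/
def BPA.trR {V Act : Type} (G : BPA V Act) (R : Set V) : List V → Act → List V → Prop :=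
  fun s a t => G.tr s a t ∧ ¬ (∀ X ∈ s, X ∈ R)

/-- `R_γ`: the set of variables redundant w.r.t. `γ`, i.e. those `X` with `Xγ ~ γ`. -/
def RedSet {V Act : Type} (G : BPA V Act) (τ : Act) (γ : List V) : Set V :=
  {X : V | BBisim G.tr τ (X :: γ) γ}

/-- `α` is a redundancy-free prefix of `αγ`: it cannot be written as `δXβ` with
`Xβγ ~ βγ`. -/
def RedFreePrefix {V Act : Type} (G : BPA V Act) (τ : Act) (α γ : List V) : Prop :=
  ¬ ∃ (δ : List V) (X : V) (β : List V),
      α = δ ++ X :: β ∧ BBisim G.tr τ (X :: (β ++ γ)) (β ++ γ)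

/-- A finite-state transducer reading (and writing) from right to left. -/
structure Transducer (Q V : Type) where
  delta : Q → V → Q × List V
  q0 : Q

/-- Running the transducer on an input string, right to left:
`T.run α q = (q', β)` means `q' ⇐α|β= q`. -/
def Transducer.run {Q V : Type} (T : Transducer Q V) : List V → Q → Q × List V
  | [], q => (q, [])
  | A :: α, q =>
      let p := T.run α q
      ((T.delta p.1 A).1, (T.delta p.1 A).2 ++ p.2)

/-- `T_q(α)`: the output of `T` on input `α`, started in state `q`. -/
def Transducer.out {Q V : Type} (T : Transducer Q V) (q : Q) (α : List V) : List V :=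
  (T.run α q).2

/-- `q`-normal forms: `ε ∈ NF_q`, and `αA ∈ NF_q` iff `A` is a `q`-prime and
`α` is a `q'`-normal form where `q' ⇐A|A= q`. -/
inductive Transducer.NF {Q V : Type} (T : Transducer Q V) : Q → List V → Prop
  | nil (q : Q) : Transducer.NF T q []
  | snoc {q : Q} {A : V} {α : List V} :
      (T.delta q A).2 = [A] → Transducer.NF T (T.delta q A).1 α →
      Transducer.NF T q (α ++ [A])

/-- A normal-form-computing (nfc) transducer: each `T_q(A)` is a `q`-normal form,
and `q' ⇐A|γ= q` implies `q' ⇐γ|γ= q`. -/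
def Transducer.IsNFC {Q V : Type} (T : Transducer Q V) : Prop :=
  ∀ (q : Q) (A : V),
    Transducer.NF T q (T.delta q A).2 ∧ T.run (T.delta q A).2 q = T.delta q A

/-- A τ-path in `L_G` along which the `T_q`-output stays constant. -/
inductive ConstTauSeq {Q V Act : Type} (tr : List V → Act → List V → Prop) (τ : Act)
    (T : Transducer Q V) (q : Q) : List V → List V → Prop
  | refl (α : List V) : ConstTauSeq tr τ T q α α
  | step {α α' α'' : List V} : tr α τ α' → T.out q α' = T.out q α →
      ConstTauSeq tr τ T q α' α'' → ConstTauSeq tr τ T q α α''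

/-- The long move `α ⇒a_q β`. -/
def BigStep {Q V Act : Type} (G : BPA V Act) (τ : Act) (T : Transducer Q V) (q : Q)
    (α : List V) (a : Act) (β : List V) : Prop :=
  (a = τ ∧ β = T.out q α) ∨
  ∃ αk β', ConstTauSeq G.tr τ T q α αk ∧ G.tr αk a β' ∧ β = T.out q β'

/-- The equivalence `α₁ ≈_q α₂`: the same long moves are available. -/
def TApprox {Q V Act : Type} (G : BPA V Act) (τ : Act) (T : Transducer Q V) (q : Q)
    (α₁ α₂ : List V) : Prop :=
  ∀ a β, BigStep G τ T q α₁ a β ↔ BigStep G τ T q α₂ a β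

/-- Consistency of an nfc-transducer with a BPA system (Definition 4.1). -/
def ConsistentWith {Q V Act : Type} (T : Transducer Q V) (G : BPA V Act) (τ : Act) : Prop :=
  (∀ A : V, T.out T.q0 [A] = [] → TApprox G τ T T.q0 [A] []) ∧
  (∀ (q : Q) (A : V), T.out q [A] ≠ [] → TApprox G τ T q [A] (T.out q [A])) ∧
  (∀ (q : Q) (A C : V), T.out q [A, C] = [C] → T.out q [C] = [C] →
    TApprox G τ T q [A, C] [C])

section CCAux

variable {S Act : Type} {tr : S → Act → S → Prop} {τ : Act}

theorem TauSeq_imp {B B' : S → S → Prop} {s s' : S} (h : ∀ y, B s y → B' s' y)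
    {t tk : S} (hseq : TauSeq tr τ B s t tk) : TauSeq tr τ B' s' t tk := by
  induction hseq with
  | refl t => exact TauSeq.refl t
  | step h1 h2 _ ih => exact TauSeq.step h1 (h _ h2) ih

theorem TauSeq_append {B : S → S → Prop} {s t1 t2 t3 : S}
    (h1 : TauSeq tr τ B s t1 t2) (h2 : TauSeq tr τ B s t2 t3) :
    TauSeq tr τ B s t1 t3 := by
  induction h1 with
  | refl => exact h2
  | step ha hb _ ih => exact TauSeq.step ha hb (ih h2)

theorem TauSeq_snoc {B : S → S → Prop} {s t tk t' : S}
    (h : TauSeq tr τ B s t tk) (htr : tr tk τ t') (hb : B s t') :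
    TauSeq tr τ B s t t' :=
  TauSeq_append h (TauSeq.step htr hb (TauSeq.refl t'))

theorem TauSeq_end {B : S → S → Prop} {s t tk : S}
    (h : TauSeq tr τ B s t tk) (h0 : B s t) : B s tk := by
  induction h with
  | refl => exact h0
  | step _ hb _ ih => exact ih hb

theorem TauSeq_cases_last {B : S → S → Prop} {s t tk : S}
    (h : TauSeq tr τ B s t tk) :
    tk = t ∨ ∃ tm, TauSeq tr τ B s t tm ∧ tr tm τ tk ∧ B s tk := by
  induction h with
  | refl => exact Or.inl rfl
  | step h1 h2 _ ih =>
    rcases ih with rfl | ⟨tm, hseq, htr, hb⟩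
    · exact Or.inr ⟨_, TauSeq.refl _, h1, h2⟩
    · exact Or.inr ⟨tm, TauSeq.step h1 h2 hseq, htr, hb⟩

theorem isBB_swap {B : S → S → Prop} (h : IsBranchingBisim tr τ B) :
    IsBranchingBisim tr τ (fun x y => B y x) := by
  intro s t hst
  obtain ⟨h1, h2⟩ := h t s hst
  exact ⟨h2, h1⟩

theorem isBB_bbisim : IsBranchingBisim tr τ (BBisim tr τ) := by
  rintro s t ⟨B, hB, hst⟩
  have sub : ∀ x y, B x y → BBisim tr τ x y := fun x y hxy => ⟨B, hB, hxy⟩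
  obtain ⟨h1, h2⟩ := hB s t hst
  constructor
  · intro a s' hs
    rcases h1 a s' hs with ⟨rfl, hh⟩ | ⟨tk, t', hseq, htr, hh⟩
    · exact Or.inl ⟨rfl, sub _ _ hh⟩
    · exact Or.inr ⟨tk, t', TauSeq_imp (fun y hy => sub _ _ hy) hseq, htr, sub _ _ hh⟩
  · intro a t' ht
    rcases h2 a t' ht with ⟨rfl, hh⟩ | ⟨sk, s', hseq, htr, hh⟩
    · exact Or.inl ⟨rfl, sub _ _ hh⟩
    · exact Or.inr ⟨sk, s',
        TauSeq_imp (B' := fun u v => BBisim tr τ v u) (fun y hy => sub _ _ hy) hseq,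
        htr, sub _ _ hh⟩

theorem bbisim_symm {s t : S} (h : BBisim tr τ s t) : BBisim tr τ t s := by
  obtain ⟨B, hB, hst⟩ := h
  exact ⟨fun x y => B y x, isBB_swap hB, hst⟩

/-- Simulation of a `TauSeq` across branching bisimilarity. -/
theorem sim_tauseq {s t tk : S} (hseq : TauSeq tr τ (BBisim tr τ) s t tk) :
    ∀ u, BBisim tr τ s t → BBisim tr τ t u →
      ∃ uk, TauSeq tr τ (fun x z => ∃ y, BBisim tr τ x y ∧ BBisim tr τ y z) s u uk ∧
        BBisim tr τ tk uk := by
  induction hseq with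
  | refl t => exact fun u _ htu => ⟨u, TauSeq.refl u, htu⟩
  | step h1 h2 _ ih =>
    intro u hst htu
    rcases (isBB_bbisim _ _ htu).1 τ _ h1 with ⟨_, hh⟩ | ⟨uj, u1, useq, utr, hh⟩
    · exact ih u h2 hh
    · obtain ⟨uk, seq2, hk⟩ := ih u1 h2 hh
      refine ⟨uk, TauSeq_append (TauSeq_snoc
        (TauSeq_imp (fun y hy => ⟨_, hst, hy⟩) useq) utr ⟨_, h2, hh⟩) seq2, hk⟩

theorem isBB_comp :
    IsBranchingBisim tr τ (fun x z => ∃ y, BBisim tr τ x y ∧ BBisim tr τ y z) := by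
  set C : S → S → Prop := fun x z => ∃ y, BBisim tr τ x y ∧ BBisim tr τ y z with hC
  have csymm : ∀ x z, C x z → C z x := by
    rintro x z ⟨y, h1, h2⟩
    exact ⟨y, bbisim_symm h2, bbisim_symm h1⟩
  have main : ∀ s u, C s u → ∀ a s', tr s a s' →
      (a = τ ∧ C s' u) ∨ ∃ uk u', TauSeq tr τ C s u uk ∧ tr uk a u' ∧ C s' u' := by
    rintro s u ⟨t, hst, htu⟩ a s' hs
    rcases (isBB_bbisim s t hst).1 a s' hs with ⟨rfl, hh⟩ | ⟨tk, t', tseq, ttr, hs't'⟩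
    · exact Or.inl ⟨rfl, ⟨t, hh, htu⟩⟩
    · obtain ⟨uk, useq, hk⟩ := sim_tauseq tseq u hst htu
      have hstk := TauSeq_end tseq hst
      rcases (isBB_bbisim tk uk hk).1 a t' ttr with ⟨rfl, hh⟩ | ⟨uj, u', useq2, utr, hh⟩
      · rcases TauSeq_cases_last useq with rfl | ⟨um, seqm, trm, _⟩
        · exact Or.inl ⟨rfl, ⟨t', hs't', hh⟩⟩
        · exact Or.inr ⟨um, uk, seqm, trm, ⟨t', hs't', hh⟩⟩
      · exact Or.inr ⟨uj, u',
          TauSeq_append useq (TauSeq_imp (fun y hy => ⟨tk, hstk, hy⟩) useq2),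
          utr, ⟨t', hs't', hh⟩⟩
  intro s u hsu
  constructor
  · exact main s u hsu
  · intro a u' hu
    rcases main u s (csymm _ _ hsu) a u' hu with ⟨rfl, hh⟩ | ⟨sk, s', sseq, str, hh⟩
    · exact Or.inl ⟨rfl, csymm _ _ hh⟩
    · exact Or.inr ⟨sk, s',
        TauSeq_imp (B' := fun u v => C v u) (fun y hy => csymm _ _ hy) sseq,
        str, csymm _ _ hh⟩

theorem bbisim_trans {s t u : S} (h1 : BBisim tr τ s t) (h2 : BBisim tr τ t u) :
    BBisim tr τ s u :=
  ⟨fun x z => ∃ y, BBisim tr τ x y ∧ BBisim tr τ y z, isBB_comp, ⟨t, h1, h2⟩⟩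

theorem silent_step {s s' : S} {a : Act} (hs : SilentState tr τ s) (h : tr s a s') :
    a = τ ∧ SilentState tr τ s' := by
  constructor
  · exact hs [a] s' (Steps.step h (Steps.refl s')) a (by simp)
  · intro w x hw b hb
    exact hs (a :: w) x (Steps.step h hw) b (by simp [hb])

theorem silent_tauseq {B : S → S → Prop} {x s sk : S}
    (h : TauSeq tr τ B x s sk) (hs : SilentState tr τ s) : SilentState tr τ sk := by
  induction h with
  | refl => exact hs
  | step h1 _ _ ih => exact ih (silent_step hs h1).2

theorem silent_match {s t t' : S} {a : Act} (hst : BBisim tr τ s t)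
    (hs : SilentState tr τ s) (h : tr t a t') :
    a = τ ∧ ∃ s', SilentState tr τ s' ∧ BBisim tr τ s' t' := by
  rcases (isBB_bbisim s t hst).2 a t' h with ⟨rfl, h2⟩ | ⟨sk, s', sseq, str, h2⟩
  · exact ⟨rfl, s, hs, h2⟩
  · have hsk : SilentState tr τ sk := silent_tauseq sseq hs
    obtain ⟨rfl, hs'⟩ := silent_step hsk str
    exact ⟨rfl, s', hs', h2⟩

theorem silent_steps_aux {t w t'} (hw : Steps tr t w t') :
    ∀ s, BBisim tr τ s t → SilentState tr τ s → ∀ a ∈ w, a = τ := by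
  induction hw with
  | refl x => intro s _ _ a ha; simp at ha
  | step htr hsteps ih =>
    intro s hst hs b hb
    obtain ⟨rfl, s1, hs1, h1⟩ := silent_match hst hs htr
    rcases List.mem_cons.mp hb with rfl | hb
    · rfl
    · exact ih s1 h1 hs1 b hb

theorem silent_of_bbisim {s t : S} (h : BBisim tr τ s t) (hs : SilentState tr τ s) :
    SilentState tr τ t :=
  fun w t' hw => silent_steps_aux hw s h hs

theorem ccpath_of_tauseq {s t tk : S} (hseq : TauSeq tr τ (BBisim tr τ) s t tk) :
    ∀ {m v}, BBisim tr τ s t → CCPath tr τ tk m v → CCPath tr τ t m v := by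
  induction hseq with
  | refl t => exact fun _ hp => hp
  | step h1 h2 _ ih =>
    intro m v hst hp
    exact CCPath.stepEq h1 (bbisim_trans (bbisim_symm hst) h2) (ih h2 hp)

theorem ccpath_transfer {s u : S} {n : ℕ} (hp : CCPath tr τ s n u) :
    SilentState tr τ u → ∀ t, BBisim tr τ s t →
      ∃ m u', m ≤ n ∧ CCPath tr τ t m u' ∧ SilentState tr τ u' := by
  induction hp with
  | refl s =>
    intro hu t hst
    exact ⟨0, t, le_refl 0, CCPath.refl t, silent_of_bbisim hst hu⟩
  | stepEq htr hb hp ih =>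
    intro hu t hst
    exact ih hu t (bbisim_trans (bbisim_symm hb) hst)
  | stepNe htr hb hp ih =>
    intro hu t hst
    rcases (isBB_bbisim _ _ hst).1 _ _ htr with ⟨rfl, hh⟩ | ⟨tk, t', tseq, ttr, hh⟩
    · exact absurd (bbisim_trans hst (bbisim_symm hh)) hb
    · obtain ⟨m, u', hm, hpt', hu'⟩ := ih hu t' hh
      have hstk := TauSeq_end tseq hst
      have hne : ¬ BBisim tr τ tk t' := fun hc =>
        hb (bbisim_trans hstk (bbisim_trans hc (bbisim_symm hh)))
      exact ⟨m + 1, u', Nat.succ_le_succ hm,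
        ccpath_of_tauseq tseq hst (CCPath.stepNe ttr hne hpt'), hu'⟩

theorem ccNorm_le_of_bbisim {s t : S} (h : BBisim tr τ s t) :
    ccNorm tr τ t ≤ ccNorm tr τ s := by
  unfold ccNorm
  apply le_sInf
  rintro n ⟨ℓ, rfl, u, hp, hu⟩
  obtain ⟨m, u', hm, hpt, hu'⟩ := ccpath_transfer hp hu t h
  calc sInf {n : ℕ∞ | ∃ ℓ : ℕ, n = (ℓ : ℕ∞) ∧
        ∃ v, CCPath tr τ t ℓ v ∧ SilentState tr τ v}
      ≤ (m : ℕ∞) := sInf_le ⟨m, rfl, u', hpt, hu'⟩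
    _ ≤ (ℓ : ℕ∞) := by exact_mod_cast hm

end CCAux

/-- Observation 2.1: branching bisimilar states have the same
class-change norm (possibly ω). -/
theorem ccNorm_eq_of_bbisim {S Act : Type} (tr : S → Act → S → Prop) (τ : Act)
    (s t : S) (h : BBisim tr τ s t) :
    ccNorm tr τ s = ccNorm tr τ t :=
  le_antisymm (ccNorm_le_of_bbisim (bbisim_symm h)) (ccNorm_le_of_bbisim h)
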